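/- Let v₁ < ⋯ < v_r be natural numbers, and set δ_j = δ(v_j, v_{j+1}) for j ∈ [r−1]. If the sequence δ₁, …, δ_{r−1} is strictly increasing, then for every subset of k vertices v_{i₁} < ⋯ < v_{i_k}, the sequence δ(v_{i₁},v_{i₂}), δ(v_{i₂},v_{i₃}), …, δ(v_{i_{k−1}},v_{i_k}) is strictly increasing, and in fact δ(v_{i_t},v_{i_{t+1}}) = δ_{i_{t+1}−1}. -/

import Mathlib

/-- `delta u v` is the largest index `i` such that the `i`-th binary digits of `u` and `v`
differ. -/
noncomputable def delta (u v : ℕ) : ℕ := sSup {i | u.testBit i ≠ v.testBit i}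

lemma delta_bddAbove (u v : ℕ) : BddAbove {i | u.testBit i ≠ v.testBit i} := by
  refine ⟨max u v, fun j hj => ?_⟩
  by_contra h
  push_neg at h
  apply hj
  rw [Nat.testBit_eq_false_of_lt, Nat.testBit_eq_false_of_lt]
  · exact lt_of_lt_of_le (Nat.lt_two_pow_self (n := v)) (Nat.pow_le_pow_right (by norm_num) (by omega))
  · exact lt_of_lt_of_le (Nat.lt_two_pow_self (n := u)) (Nat.pow_le_pow_right (by norm_num) (by omega))

lemma delta_eq_of_gt (u v : ℕ) {j : ℕ} (h : delta u v < j) : u.testBit j = v.testBit j := by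
  by_contra hne
  exact absurd (le_csSup (delta_bddAbove u v) hne) (not_le.mpr h)

lemma delta_mem {u v : ℕ} (h : u ≠ v) :
    u.testBit (delta u v) ≠ v.testBit (delta u v) := by
  have hne : {i | u.testBit i ≠ v.testBit i}.Nonempty := by
    by_contra hc
    apply h
    apply Nat.eq_of_testBit_eq
    intro j
    by_contra hj
    exact hc ⟨j, hj⟩
  exact Nat.sSup_mem hne (delta_bddAbove u v)

lemma delta_ultra {u w x : ℕ} (hvw : w ≠ x) (h : delta u w < delta w x) :
    delta u x = delta w x := by
  have hmem : u.testBit (delta w x) ≠ x.testBit (delta w x) := by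
    rw [delta_eq_of_gt u w h]; exact delta_mem hvw
  apply le_antisymm
  · refine csSup_le ⟨_, hmem⟩ fun j hj => ?_
    by_contra hc
    push_neg at hc
    exact hj ((delta_eq_of_gt u w (h.trans hc)).trans (delta_eq_of_gt w x hc))
  · exact le_csSup (delta_bddAbove u x) hmem


lemma delta_key (r : ℕ) (w : ℕ → ℕ) (hw : ∀ a b, a < b → b < r → w a < w b)
    (hinc : ∀ j j', j + 1 < r → j' + 1 < r → j < j' →
      delta (w j) (w (j + 1)) < delta (w j') (w (j' + 1))) :
    ∀ d a b, b - a ≤ d → a < b → b < r → delta (w a) (w b) = delta (w (b - 1)) (w b) := by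
  intro d
  induction d with
  | zero => intro a b h hab _; exact absurd h (by omega)
  | succ d ih =>
    intro a b h hab hb
    rcases eq_or_lt_of_le (Nat.succ_le_of_lt hab) with he | hlt
    · rw [show b - 1 = a from by omega]
    · have h1 : delta (w a) (w (b - 1)) = delta (w (b - 1 - 1)) (w (b - 1)) :=
        ih a (b - 1) (by omega) (by omega) (by omega)
      have h3 := hinc (b - 1 - 1) (b - 1) (by omega) (by omega) (by omega)
      rw [show b - 1 - 1 + 1 = b - 1 from by omega, show b - 1 + 1 = b from by omega] at h3
      rw [← h1] at h3
      exact delta_ultra (ne_of_lt (hw (b - 1) b (by omega) hb)) h3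

set_option maxHeartbeats 16000000 in
theorem stmt3 (r k : ℕ) (v : Fin r → ℕ) (hv : StrictMono v)
    (hinc : ∀ (j j' : ℕ) (hj : j + 1 < r) (hj' : j' + 1 < r), j < j' →
      delta (v ⟨j, by omega⟩) (v ⟨j + 1, hj⟩) < delta (v ⟨j', by omega⟩) (v ⟨j' + 1, hj'⟩))
    (i : Fin k → Fin r) (hi : StrictMono i) :
    (∀ (t t' : ℕ) (ht : t + 1 < k) (ht' : t' + 1 < k), t < t' →
      delta (v (i ⟨t, by omega⟩)) (v (i ⟨t + 1, ht⟩)) <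
        delta (v (i ⟨t', by omega⟩)) (v (i ⟨t' + 1, ht'⟩))) ∧
    (∀ (t : ℕ) (ht : t + 1 < k),
      delta (v (i ⟨t, by omega⟩)) (v (i ⟨t + 1, ht⟩)) =
        delta (v ⟨(i ⟨t + 1, ht⟩).val - 1, by have := (i ⟨t + 1, ht⟩).isLt; omega⟩)
          (v (i ⟨t + 1, ht⟩))) := by
  obtain ⟨w, hwe⟩ : ∃ w : ℕ → ℕ, ∀ (n : ℕ) (hn : n < r), w n = v ⟨n, hn⟩ :=
    ⟨fun n => if h : n < r then v ⟨n, h⟩ else 0, fun n hn => dif_pos hn⟩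
  have conv1 : ∀ x : Fin r, w x.val = v x := fun x =>
    (hwe x.val x.isLt).trans (congrArg v (Fin.ext rfl))
  have hw : ∀ a b, a < b → b < r → w a < w b := by
    intro a b hab hb
    rw [hwe a (by omega), hwe b hb]
    exact hv (Fin.mk_lt_mk.mpr hab)
  have hinc' : ∀ j j', j + 1 < r → j' + 1 < r → j < j' →
      delta (w j) (w (j + 1)) < delta (w j') (w (j' + 1)) := by
    intro j j' hj hj' hjj'
    rw [hwe j (by omega), hwe (j + 1) hj, hwe j' (by omega), hwe (j' + 1) hj']
    exact hinc j j' hj hj' hjj'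
  constructor
  · intro t t' ht ht' htt'
    have ha : (i ⟨t, by omega⟩).val < (i ⟨t + 1, ht⟩).val := hi (Fin.mk_lt_mk.mpr (by omega))
    have ha' : (i ⟨t', by omega⟩).val < (i ⟨t' + 1, ht'⟩).val := hi (Fin.mk_lt_mk.mpr (by omega))
    have hmid : (i ⟨t + 1, ht⟩).val ≤ (i ⟨t', by omega⟩).val := by
      rcases eq_or_lt_of_le (Nat.succ_le_of_lt htt') with he | hlt
      · exact le_of_eq (congrArg (fun x => (i x).val) (Fin.ext he))
      · exact le_of_lt (hi (Fin.mk_lt_mk.mpr hlt))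
    have hb1 := (i ⟨t + 1, ht⟩).isLt
    have hb2 := (i ⟨t' + 1, ht'⟩).isLt
    have g1 : delta (v (i ⟨t, by omega⟩)) (v (i ⟨t + 1, ht⟩)) =
        delta (w ((i ⟨t + 1, ht⟩).val - 1)) (w (i ⟨t + 1, ht⟩).val) := by
      rw [← conv1 (i ⟨t, by omega⟩), ← conv1 (i ⟨t + 1, ht⟩)]
      exact delta_key r w hw hinc' _ _ _ le_rfl ha hb1
    have g2 : delta (v (i ⟨t', by omega⟩)) (v (i ⟨t' + 1, ht'⟩)) =
        delta (w ((i ⟨t' + 1, ht'⟩).val - 1)) (w (i ⟨t' + 1, ht'⟩).val) := by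
      rw [← conv1 (i ⟨t', by omega⟩), ← conv1 (i ⟨t' + 1, ht'⟩)]
      exact delta_key r w hw hinc' _ _ _ le_rfl ha' hb2
    rw [g1, g2]
    have hstep := hinc' ((i ⟨t + 1, ht⟩).val - 1) ((i ⟨t' + 1, ht'⟩).val - 1)
      (by omega) (by omega) (by omega)
    rwa [show (i ⟨t + 1, ht⟩).val - 1 + 1 = (i ⟨t + 1, ht⟩).val from by omega,
      show (i ⟨t' + 1, ht'⟩).val - 1 + 1 = (i ⟨t' + 1, ht'⟩).val from by omega] at hstep
  · intro t ht
    have ha : (i ⟨t, by omega⟩).val < (i ⟨t + 1, ht⟩).val := hi (Fin.mk_lt_mk.mpr (by omega))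
    have hb1 := (i ⟨t + 1, ht⟩).isLt
    have g := delta_key r w hw hinc' _ _ _ le_rfl ha hb1
    rwa [conv1 (i ⟨t, by omega⟩), conv1 (i ⟨t + 1, ht⟩),
      hwe ((i ⟨t + 1, ht⟩).val - 1) (by omega)] at g
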